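/- Let 0 ≤ e < 1 and let ω ∈ ℂ with |ω| = 1 and ω ≠ 1. For every continuously differentiable function x: [0,2π] → ℂ with x(2π) = ω·x(0) that is not identically zero, the integral ∫₀^{2π} (|x'(t)|² − (e cos t)/(1 + e cos t)·|x(t)|²) dt is strictly positive. -/

import Mathlib

/-!
The function `φ t = 1 + e cos t` is a positive solution of `φ'' + p φ = 0` with
`p = e cos t / (1 + e cos t)`, so `a = φ'/φ` solves the Riccati equation `a' = -p - a²`.
Picone's identity then writes the form as `∫ |x' - a x|²` plus the boundary term
`[a |x|²]₀^{2π}`, which vanishes because `sin` does. The integral can only vanish if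
`x' = (φ'/φ) x`, i.e. `x = c φ`; since `φ(2π) = φ(0)`, the condition `x(2π) = ω x(0)` with
`ω ≠ 1` then forces `c = 0`.
-/

open Set Real

theorem hasDerivAt_div_riccati {φ φ' p : ℝ → ℝ} {t : ℝ} (hφ : HasDerivAt φ (φ' t) t)
    (hφ' : HasDerivAt φ' (-(p t * φ t)) t) (hφ0 : φ t ≠ 0) :
    HasDerivAt (fun s => φ' s / φ s) (-p t - (φ' t / φ t) ^ 2) t :=
  (hφ'.div hφ hφ0).congr_deriv (by field_simp)

section Picone

variable {E : Type*} [NormedAddCommGroup E] [InnerProductSpace ℝ E]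

theorem hasDerivAt_mul_norm_sq_of_riccati {a p : ℝ → ℝ} {x : ℝ → E} {v : E} {t : ℝ}
    (ha : HasDerivAt a (-p t - a t ^ 2) t) (hx : HasDerivAt x v t) :
    HasDerivAt (fun s => a s * ‖x s‖ ^ 2)
      (‖v‖ ^ 2 - p t * ‖x t‖ ^ 2 - ‖v - a t • x t‖ ^ 2) t :=
  (ha.mul hx.norm_sq).congr_deriv <| by
    rw [norm_sub_sq_real, norm_smul, real_inner_smul_right, real_inner_comm, Real.norm_eq_abs,
      mul_pow, sq_abs]
    ring

/-- Picone's identity `‖x'‖² - p ‖x‖² = ‖x' - a x‖² + (a ‖x‖²)'` for a solution `a` of the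
Riccati equation `a' = -p - a²`, integrated. -/
theorem integral_norm_sq_sub_mul_norm_sq_eq {α β : ℝ} (hαβ : α ≤ β) {a p : ℝ → ℝ} {x v : ℝ → E}
    (ha : ContinuousOn a (Icc α β)) (hp : ContinuousOn p (Icc α β))
    (hap : ∀ t ∈ Ioo α β, HasDerivAt a (-p t - a t ^ 2) t)
    (hx : ContinuousOn x (Icc α β)) (hv : ContinuousOn v (Icc α β))
    (hxv : ∀ t ∈ Ioo α β, HasDerivAt x (v t) t) :
    ∫ t in α..β, (‖v t‖ ^ 2 - p t * ‖x t‖ ^ 2) =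
      (∫ t in α..β, ‖v t - a t • x t‖ ^ 2) + (a β * ‖x β‖ ^ 2 - a α * ‖x α‖ ^ 2) := by
  have hform :
      IntervalIntegrable (fun t => ‖v t‖ ^ 2 - p t * ‖x t‖ ^ 2) MeasureTheory.volume α β :=
    ((hv.norm.pow 2).sub (hp.mul (hx.norm.pow 2))).intervalIntegrable_of_Icc hαβ
  have hsq : IntervalIntegrable (fun t => ‖v t - a t • x t‖ ^ 2) MeasureTheory.volume α β :=
    ((hv.sub (ha.smul hx)).norm.pow 2).intervalIntegrable_of_Icc hαβ
  have hftc := intervalIntegral.integral_eq_sub_of_hasDerivAt_of_le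
    (f := fun t => a t * ‖x t‖ ^ 2) hαβ
    (ha.mul (hx.norm.pow 2)) (fun t ht => hasDerivAt_mul_norm_sq_of_riccati (hap t ht) (hxv t ht))
    (hform.sub hsq)
  rw [intervalIntegral.integral_sub hform hsq] at hftc
  linarith

end Picone

theorem eq_div_smul_of_hasDerivWithinAt {F : Type*} [NormedAddCommGroup F] [NormedSpace ℝ F]
    {α β : ℝ} {φ φ' : ℝ → ℝ} {x : ℝ → F}
    (hφ : ∀ t ∈ Icc α β, HasDerivAt φ (φ' t) t) (hφ0 : ∀ t ∈ Icc α β, φ t ≠ 0)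
    (hx : ∀ t ∈ Icc α β, HasDerivWithinAt x ((φ' t / φ t) • x t) (Icc α β) t) :
    ∀ t ∈ Icc α β, x t = (φ t / φ α) • x α := by
  have hderiv : ∀ t ∈ Icc α β,
      HasDerivWithinAt (fun s => (φ s)⁻¹ • x s) 0 (Icc α β) t := fun t ht =>
    (((hφ t ht).inv (hφ0 t ht)).hasDerivWithinAt.smul (hx t ht)).congr_deriv <| by
      rw [smul_smul, ← add_smul, Pi.inv_apply,
        show (φ t)⁻¹ * (φ' t / φ t) + -φ' t / φ t ^ 2 = 0 by field_simp; ring, zero_smul]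
  have hconst := constant_of_has_deriv_right_zero
    (fun t ht => (hderiv t ht).continuousWithinAt)
    (fun t ht => (hderiv t (Ico_subset_Icc_self ht)).mono_of_mem_nhdsWithin
      (Filter.mem_of_superset (Icc_mem_nhdsGE ht.2) (Icc_subset_Icc_left ht.1)))
  intro t ht
  rw [div_eq_mul_inv, mul_smul, ← hconst t ht, smul_inv_smul₀ (hφ0 t ht)]

theorem one_add_mul_cos_pos {e : ℝ} (he : |e| < 1) (t : ℝ) : 0 < 1 + e * cos t := by
  have : |e * cos t| < 1 := by
    rw [abs_mul]
    exact (mul_le_of_le_one_right (abs_nonneg e) (abs_cos_le_one t)).trans_lt he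
  linarith [neg_abs_le (e * cos t)]

theorem hasDerivAt_one_add_mul_cos (e t : ℝ) :
    HasDerivAt (fun s => 1 + e * cos s) (-(e * sin t)) t :=
  (((hasDerivAt_cos t).const_mul e).const_add 1).congr_deriv (by ring)

theorem hasDerivAt_kepler_riccati {e : ℝ} (he : |e| < 1) (t : ℝ) :
    HasDerivAt (fun s => -(e * sin s) / (1 + e * cos s))
      (-(e * cos t / (1 + e * cos t)) - (-(e * sin t) / (1 + e * cos t)) ^ 2) t :=
  hasDerivAt_div_riccati (p := fun s => e * cos s / (1 + e * cos s))
    (hasDerivAt_one_add_mul_cos e t)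
    (((hasDerivAt_sin t).const_mul e).neg.congr_deriv
      (by field_simp [(one_add_mul_cos_pos he t).ne']))
    (one_add_mul_cos_pos he t).ne'

theorem eq_zero_of_hasDerivWithinAt_kepler_of_twisted {e : ℝ} (he : |e| < 1) {ω : ℂ}
    (hω1 : ω ≠ 1) {x : ℝ → ℂ}
    (hx : ∀ t ∈ Icc 0 (2 * π),
      HasDerivWithinAt x ((-(e * sin t) / (1 + e * cos t)) • x t) (Icc 0 (2 * π)) t)
    (hbc : x (2 * π) = ω * x 0) :
    ∀ t ∈ Icc 0 (2 * π), x t = 0 := by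
  have hφ := one_add_mul_cos_pos he
  have hprop := eq_div_smul_of_hasDerivWithinAt (fun t _ => hasDerivAt_one_add_mul_cos e t)
    (fun t _ => (hφ t).ne') hx
  have hx0 : x 0 = 0 := by
    have hcos : cos (2 * π) = cos 0 := by rw [cos_two_pi, cos_zero]
    have hperiodic := hprop (2 * π) (right_mem_Icc.2 (by positivity))
    rw [hcos, div_self (hφ 0).ne', one_smul] at hperiodic
    rw [hperiodic] at hbc
    exact (mul_eq_zero.1 (by linear_combination hbc : (1 - ω) * x 0 = 0)).resolve_left
      (sub_ne_zero.2 hω1.symm)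
  intro t ht
  rw [hprop t ht, hx0, smul_zero]

theorem euler_kepler_form_pos (e : ℝ) (he0 : 0 ≤ e) (he1 : e < 1)
    (ω : ℂ) (hω1 : ω ≠ 1)
    (x : ℝ → ℂ) (hx : ContDiffOn ℝ 1 x (Set.Icc 0 (2 * Real.pi)))
    (hbc : x (2 * Real.pi) = ω * x 0)
    (hne : ∃ t ∈ Set.Icc (0 : ℝ) (2 * Real.pi), x t ≠ 0) :
    0 < ∫ t in (0 : ℝ)..(2 * Real.pi),
        (‖derivWithin x (Set.Icc 0 (2 * Real.pi)) t‖ ^ 2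
          - e * Real.cos t / (1 + e * Real.cos t) * ‖x t‖ ^ 2) := by
  set I := Icc (0 : ℝ) (2 * π)
  have hπ : (0 : ℝ) < 2 * π := by positivity
  have he : |e| < 1 := abs_lt.2 ⟨by linarith, he1⟩
  have hφ := one_add_mul_cos_pos he
  set a : ℝ → ℝ := fun t => -(e * sin t) / (1 + e * cos t)
  have ha : Continuous a :=
    continuous_iff_continuousAt.2 fun t => (hasDerivAt_kepler_riccati he t).continuousAt
  have hxd : ∀ t ∈ I, HasDerivWithinAt x (derivWithin x I t) I t := fun t ht =>
    ((hx.differentiableOn one_ne_zero) t ht).hasDerivWithinAt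
  have hv := hx.continuousOn_derivWithin (uniqueDiffOn_Icc hπ) le_rfl
  have hp : Continuous fun t => e * cos t / (1 + e * cos t) := by
    fun_prop (disch := exact fun t => (hφ t).ne')
  rw [integral_norm_sq_sub_mul_norm_sq_eq hπ.le ha.continuousOn hp.continuousOn
    (fun t _ => hasDerivAt_kepler_riccati he t) hx.continuousOn hv
    (fun t ht => (hxd t (Ioo_subset_Icc_self ht)).hasDerivAt (Icc_mem_nhds ht.1 ht.2))]
  simp only [a, sin_zero, sin_two_pi, mul_zero, neg_zero, zero_div, zero_mul, sub_zero, add_zero]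
  refine intervalIntegral.integral_pos hπ
    ((hv.sub (ha.continuousOn.smul hx.continuousOn)).norm.pow 2) (fun _ _ => by positivity) ?_
  by_contra! hzero
  obtain ⟨t, ht, hxt⟩ := hne
  refine hxt (eq_zero_of_hasDerivWithinAt_kepler_of_twisted he hω1 (fun s hs => ?_) hbc t ht)
  rw [← sub_eq_zero.1 (norm_eq_zero.1 ((sq_nonpos_iff _).1 (hzero s hs)))]
  exact hxd s hs
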